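/- Let G be a finite connected weighted graph and S a set of sources. If the stretch factor F_S = max_{p≠q} d(p,S,q)/d(p,q) satisfies F_S ≥ 1 (which always holds by the triangle inequality), then for any vertex q and any non-neighbor p maximizing d(p,S,q)/d(p,q), moving p one step along a shortest path to q does not decrease the ratio: d(p̃,S,q)/d(p̃,q) ≥ d(p,S,q)/d(p,q). -/
import Mathlib


open SimpleGraph Finset

noncomputable def walkLen {V : Type*} (G : SimpleGraph V) (ℓ : V → V → ℝ) {p q : V}
    (w : G.Walk p q) : ℝ :=
  (w.darts.map fun d => ℓ d.toProd.1 d.toProd.2).sum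

noncomputable def gdist {V : Type*} (G : SimpleGraph V) (ℓ : V → V → ℝ) (p q : V) : ℝ :=
  sInf {x | ∃ w : G.Walk p q, walkLen G ℓ w = x}

noncomputable def dvia {V : Type*} (G : SimpleGraph V) (ℓ : V → V → ℝ) (S : Finset V)
    (hS : S.Nonempty) (p q : V) : ℝ :=
  S.inf' hS fun s => gdist G ℓ p s + gdist G ℓ s q

noncomputable def dnear {V : Type*} (G : SimpleGraph V) (ℓ : V → V → ℝ) (S : Finset V)
    (hS : S.Nonempty) (p : V) : ℝ :=
  S.inf' hS fun s => gdist G ℓ p s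

noncomputable def stretch {V : Type*} (G : SimpleGraph V) (ℓ : V → V → ℝ) (S : Finset V)
    (hS : S.Nonempty) : ℝ :=
  sSup {x | ∃ p q : V, p ≠ q ∧ x = dvia G ℓ S hS p q / gdist G ℓ p q}

noncomputable def farthest {V : Type*} (G : SimpleGraph V) (ℓ : V → V → ℝ) (S : Finset V)
    (hS : S.Nonempty) : ℝ :=
  sSup {x | ∃ p : V, x = dnear G ℓ S hS p}

lemma walkLen_cons' {V : Type*} {G : SimpleGraph V} (ℓ : V → V → ℝ) {a b c : V}
    (h : G.Adj a b) (w : G.Walk b c) :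
    walkLen G ℓ (Walk.cons h w) = ℓ a b + walkLen G ℓ w := by
  simp [walkLen]

lemma walkLen_nonneg' {V : Type*} {G : SimpleGraph V} {ℓ : V → V → ℝ}
    (hpos : ∀ a b, G.Adj a b → 0 < ℓ a b) {p q : V} (w : G.Walk p q) :
    0 ≤ walkLen G ℓ w := by
  induction w with
  | nil => simp [walkLen]
  | cons h w ih =>
    rw [walkLen_cons']
    have := hpos _ _ h
    linarith

lemma gdist_set_nonempty {V : Type*} {G : SimpleGraph V} (hconn : G.Connected)
    (ℓ : V → V → ℝ) (p q : V) :
    {x | ∃ w : G.Walk p q, walkLen G ℓ w = x}.Nonempty := by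
  obtain ⟨w⟩ := hconn p q
  exact ⟨walkLen G ℓ w, w, rfl⟩

lemma gdist_bddBelow {V : Type*} {G : SimpleGraph V} {ℓ : V → V → ℝ}
    (hpos : ∀ a b, G.Adj a b → 0 < ℓ a b) (p q : V) :
    BddBelow {x | ∃ w : G.Walk p q, walkLen G ℓ w = x} := by
  exact ⟨0, fun x ⟨w, hw⟩ => hw ▸ walkLen_nonneg' hpos w⟩

lemma gdist_triangle_edge {V : Type*} {G : SimpleGraph V} (hconn : G.Connected)
    {ℓ : V → V → ℝ} (hpos : ∀ a b, G.Adj a b → 0 < ℓ a b) {p pt : V}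
    (hadj : G.Adj p pt) (s : V) :
    gdist G ℓ p s ≤ ℓ p pt + gdist G ℓ pt s := by
  have key : gdist G ℓ p s - ℓ p pt ≤ gdist G ℓ pt s := by
    apply le_csInf (gdist_set_nonempty hconn ℓ pt s)
    rintro x ⟨w, rfl⟩
    have h1 : gdist G ℓ p s ≤ walkLen G ℓ (Walk.cons hadj w) :=
      csInf_le (gdist_bddBelow hpos p s) ⟨_, rfl⟩
    rw [walkLen_cons'] at h1
    linarith
  linarith

lemma walkLen_append' {V : Type*} {G : SimpleGraph V} (ℓ : V → V → ℝ) {p s q : V}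
    (w1 : G.Walk p s) (w2 : G.Walk s q) :
    walkLen G ℓ (w1.append w2) = walkLen G ℓ w1 + walkLen G ℓ w2 := by
  simp [walkLen, Walk.darts_append]

lemma gdist_triangle' {V : Type*} {G : SimpleGraph V} (hconn : G.Connected)
    {ℓ : V → V → ℝ} (hpos : ∀ a b, G.Adj a b → 0 < ℓ a b) (p s q : V) :
    gdist G ℓ p q ≤ gdist G ℓ p s + gdist G ℓ s q := by
  have key1 : gdist G ℓ p q - gdist G ℓ p s ≤ gdist G ℓ s q := by
    apply le_csInf (gdist_set_nonempty hconn ℓ s q)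
    rintro y ⟨w2, rfl⟩
    have key2 : gdist G ℓ p q - walkLen G ℓ w2 ≤ gdist G ℓ p s := by
      apply le_csInf (gdist_set_nonempty hconn ℓ p s)
      rintro x ⟨w1, rfl⟩
      have h1 : gdist G ℓ p q ≤ walkLen G ℓ (w1.append w2) :=
        csInf_le (gdist_bddBelow hpos p q) ⟨_, rfl⟩
      rw [walkLen_append'] at h1
      linarith
    linarith
  linarith

lemma gdist_pos' {V : Type*} [Fintype V] {G : SimpleGraph V} (hconn : G.Connected)
    {ℓ : V → V → ℝ} (hpos : ∀ a b, G.Adj a b → 0 < ℓ a b) {a b : V} (hab : G.Adj a b)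
    {p q : V} (hne : p ≠ q) : 0 < gdist G ℓ p q := by
  classical
  set E : Finset (V × V) := Finset.univ.filter (fun x => G.Adj x.1 x.2) with hE
  have hEne : E.Nonempty := ⟨(a, b), by simp [hE, hab]⟩
  set m : ℝ := E.inf' hEne (fun x => ℓ x.1 x.2) with hm
  have hmpos : 0 < m := by
    rw [hm, Finset.lt_inf'_iff]
    rintro ⟨x, y⟩ hxy
    simp only [hE, Finset.mem_filter] at hxy
    exact hpos x y hxy.2
  have key : ∀ w : G.Walk p q, m ≤ walkLen G ℓ w := by
    intro w
    cases w with
    | nil => exact absurd rfl hne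
    | @cons _ x _ h w' =>
      rw [walkLen_cons']
      have h1 : m ≤ ℓ p x :=
        Finset.inf'_le (fun x => ℓ x.1 x.2) (by simp [hE, h] : ((p, x) : V × V) ∈ E)
      have h2 : 0 ≤ walkLen G ℓ w' := walkLen_nonneg' hpos w'
      linarith
  have : m ≤ gdist G ℓ p q := by
    apply le_csInf (gdist_set_nonempty hconn ℓ p q)
    rintro x ⟨w, rfl⟩
    exact key w
  linarith

/-- moving the maximizing non-neighbor p one step along a shortest path
towards q does not decrease the ratio. -/
theorem stmt_14 {V : Type*} [Fintype V] (G : SimpleGraph V) (hconn : G.Connected)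
    (ℓ : V → V → ℝ) (hsymm : ∀ a b, ℓ a b = ℓ b a) (hpos : ∀ a b, G.Adj a b → 0 < ℓ a b)
    (S : Finset V) (hS : S.Nonempty)
    (hstretch : 1 ≤ stretch G ℓ S hS)
    (q p : V) (hpq : p ≠ q) (hnadj : ¬ G.Adj p q)
    (hmax : ∀ p', p' ≠ q →
      dvia G ℓ S hS p' q / gdist G ℓ p' q ≤ dvia G ℓ S hS p q / gdist G ℓ p q)
    (pt : V) (hadj : G.Adj p pt) (hshort : gdist G ℓ p q = ℓ p pt + gdist G ℓ pt q) :
    dvia G ℓ S hS p q / gdist G ℓ p q ≤ dvia G ℓ S hS pt q / gdist G ℓ pt q := by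
  have hptq : pt ≠ q := by rintro rfl; exact hnadj hadj
  set a := dvia G ℓ S hS p q with ha
  set b := gdist G ℓ p q with hb
  set a' := dvia G ℓ S hS pt q with ha'
  set b' := gdist G ℓ pt q with hb'
  have hb'pos : 0 < b' := gdist_pos' hconn hpos hadj hptq
  have hwpos : 0 < ℓ p pt := hpos _ _ hadj
  have hbpos : 0 < b := by rw [hshort]; linarith
  -- dvia p q ≥ gdist p q
  have hba : b ≤ a := by
    rw [ha, dvia, Finset.le_inf'_iff]
    intro s hs
    exact gdist_triangle' hconn hpos p s q
  -- dvia p q ≤ ℓ p pt + dvia pt q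
  have haa' : a ≤ ℓ p pt + a' := by
    obtain ⟨s, hs, hseq⟩ := Finset.exists_mem_eq_inf' hS
      (fun s => gdist G ℓ pt s + gdist G ℓ s q)
    have h1 : a ≤ gdist G ℓ p s + gdist G ℓ s q :=
      Finset.inf'_le _ hs
    have h2 : gdist G ℓ p s ≤ ℓ p pt + gdist G ℓ pt s :=
      gdist_triangle_edge hconn hpos hadj s
    have hs' : a' = gdist G ℓ pt s + gdist G ℓ s q := by rw [ha', dvia, hseq]
    linarith
  rw [div_le_div_iff₀ hbpos hb'pos]
  have hbb' : b = ℓ p pt + b' := hshort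
  nlinarith [mul_nonneg hwpos.le (sub_nonneg.mpr hba)]
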